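/- arXiv:math/0502386 — 4 statements merged into one kernel-verified Lean document; each statement's English description precedes it below -/
import Mathlib

section
/- For a finite poset P, the polynomial (q-1)^2 divides K^v_P(q) - K^λ_P(q), where K^v and K^λ are the upper and lower covering polynomials of P. -/
/-!
Modulo `(q - 1)²` we have `q ^ n ≡ 1 + n (q - 1)`, so a sum `∑ q ^ (f x)` is determined mod
`(q - 1)²` by the number of terms and by `∑ f x`. Both covering polynomials have one term per
element of `P`, and `∑ κ = ∑ ι` since both count the covering pairs of `P`.
-/

open Polynomial
open scoped Classical

namespace Polynomial

variable {R : Type*} [CommRing R]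

theorem sq_X_sub_one_dvd_X_pow_sub_one_sub_natCast_mul (n : ℕ) :
    ((X : R[X]) - 1) ^ 2 ∣ X ^ n - 1 - (n : R[X]) * (X - 1) := by
  have hgeom : (X : R[X]) - 1 ∣ ∑ i ∈ Finset.range n, (X : R[X]) ^ i - (n : R[X]) := by
    simpa [eval_finsetSum] using X_sub_C_dvd_sub_C_eval (a := (1 : R))
      (p := ∑ i ∈ Finset.range n, (X : R[X]) ^ i)
  have hfactor : (X : R[X]) ^ n - 1 - (n : R[X]) * (X - 1) =
      (X - 1) * (∑ i ∈ Finset.range n, (X : R[X]) ^ i - (n : R[X])) := by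
    rw [mul_sub (X - 1), mul_geom_sum]
    ring
  rw [hfactor, sq]
  exact mul_dvd_mul_left _ hgeom

theorem sq_X_sub_one_dvd_sum_X_pow_sub_sum_X_pow_of_sum_eq {ι : Type*} (s : Finset ι)
    {f g : ι → ℕ} (hfg : ∑ i ∈ s, f i = ∑ i ∈ s, g i) :
    ((X : R[X]) - 1) ^ 2 ∣ ∑ i ∈ s, X ^ f i - ∑ i ∈ s, X ^ g i := by
  have hcast : ∑ i ∈ s, (f i : R[X]) = ∑ i ∈ s, (g i : R[X]) := by
    rw [← Nat.cast_sum, ← Nat.cast_sum, hfg]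
  have hsplit : ∑ i ∈ s, (X : R[X]) ^ f i - ∑ i ∈ s, X ^ g i =
      ∑ i ∈ s, (X ^ f i - 1 - (f i : R[X]) * (X - 1)) -
        ∑ i ∈ s, (X ^ g i - 1 - (g i : R[X]) * (X - 1)) := by
    simp only [Finset.sum_sub_distrib, ← Finset.sum_mul, hcast]
    ring
  rw [hsplit]
  exact dvd_sub
    (Finset.dvd_sum fun i _ => sq_X_sub_one_dvd_X_pow_sub_one_sub_natCast_mul (f i))
    (Finset.dvd_sum fun i _ => sq_X_sub_one_dvd_X_pow_sub_one_sub_natCast_mul (g i))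

end Polynomial

/-- For a finite poset `α`, `(q-1)²` divides the difference of the upper and
lower covering polynomials `K^v(q) - K^λ(q)`. -/
theorem sq_sub_one_dvd_covering_diff (α : Type*) [Fintype α] [PartialOrder α] :
    (X - 1) ^ 2 ∣
      ((∑ x : α, X ^ (Finset.univ.filter fun y => y ⋖ x).card : Polynomial ℤ) -
        ∑ x : α, X ^ (Finset.univ.filter fun y => x ⋖ y).card) := by
  exact sq_X_sub_one_dvd_sum_X_pow_sub_sum_X_pow_of_sum_eq _
    (Finset.sum_card_bipartiteAbove_eq_sum_card_bipartiteBelow (r := (· ⋖ ·))).symm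
end

section
/- Let L be a finite poset and P = J(L) the distributive lattice of order ideals of L ordered by inclusion. Then the upper and lower covering polynomials of P coincide, and for each k the coefficient of q^k in this common polynomial equals the number of k-element antichains in L. -/
/-
A cover `J ⋖ I` in `J(L)` adds exactly one element: if `J < I` are ideals, adjoining to `J` a
minimal element of `I \ J` gives an ideal, so a cover of ideals is a cover of finsets. Hence the
lower covers of `I` are the `I \ {m}` with `m` maximal in `I`, and the upper covers are the
`I ∪ {m}` with `m` minimal in `L \ I`. Both `I ↦ max I` and `I ↦ min (L \ I)` are bijections from
ideals onto antichains, with inverses `A ↦ ↓A` and `A ↦ L \ ↑A`, so both covering polynomials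
equal `∑_A q^#A`, summed over the antichains `A` of `L`.
-/

open Polynomial
open scoped Classical

/-- The distributive lattice `J(L)` of order ideals (downward-closed subsets)
of a finite poset `L`, ordered by inclusion. -/
def OrderIdeals (L : Type*) [Fintype L] [PartialOrder L] :=
  {I : Finset L // ∀ x ∈ I, ∀ y, y ≤ x → y ∈ I}

noncomputable instance (L : Type*) [Fintype L] [PartialOrder L] :
    Fintype (OrderIdeals L) := by unfold OrderIdeals; infer_instance

instance (L : Type*) [Fintype L] [PartialOrder L] : PartialOrder (OrderIdeals L) :=
  Subtype.partialOrder _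

section IsLowerSet

variable {α : Type*} [PartialOrder α] {s : Set α} {a : α}

lemma IsLowerSet.isLowerSet_diff_singleton_iff (hs : IsLowerSet s) (ha : a ∈ s) :
    IsLowerSet (s \ {a}) ↔ Maximal (· ∈ s) a := by
  refine ⟨fun h => ⟨ha, fun b hb hab => ?_⟩, fun h => hs.erase fun b hb hab => h.eq_of_ge hb hab⟩
  by_contra hba
  exact (h hab ⟨hb, fun hb' => hba (hb' ▸ le_rfl)⟩).2 rfl

lemma IsLowerSet.isLowerSet_insert_iff (hs : IsLowerSet s) (ha : a ∉ s) :
    IsLowerSet (insert a s) ↔ Minimal (· ∉ s) a := by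
  refine ⟨fun h => ⟨ha, fun b hb hba => ?_⟩, fun h b c hcb hb => ?_⟩
  · obtain rfl | hb' := h hba (Set.mem_insert a s)
    · exact le_rfl
    · exact absurd hb' hb
  · obtain rfl | hb := hb
    · by_cases hc : c ∈ s
      · exact Or.inr hc
      · exact Or.inl (le_antisymm hcb (h.2 hc hcb))
    · exact Or.inr (hs hcb hb)

end IsLowerSet

namespace OrderIdeals

variable {L : Type*} [Fintype L] [PartialOrder L]

open Finset

@[ext]
lemma ext {I J : OrderIdeals L} (h : ∀ x, x ∈ I.1 ↔ x ∈ J.1) : I = J :=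
  Subtype.ext (Finset.ext h)

lemma isLowerSet (I : OrderIdeals L) : IsLowerSet (I.1 : Set L) :=
  fun _ _ hba ha => I.2 _ ha _ hba

def ofIsLowerSet (s : Finset L) (hs : IsLowerSet (s : Set L)) : OrderIdeals L :=
  ⟨s, fun _ hx _ hy => hs hy hx⟩

noncomputable def ofLowerSet (s : LowerSet L) : OrderIdeals L :=
  ofIsLowerSet (s : Set L).toFinset (by simp [s.lower])

@[simp]
lemma mem_ofLowerSet {s : LowerSet L} {x : L} : x ∈ (ofLowerSet s).1 ↔ x ∈ s :=
  Set.mem_toFinset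

lemma val_covBy_val {I J : OrderIdeals L} : I.1 ⋖ J.1 ↔ I ⋖ J := by
  refine ⟨fun h => h.of_image (OrderEmbedding.subtype _), fun h => ?_⟩
  obtain ⟨m, hm⟩ := exists_minimal (s := J.1 \ I.1) (sdiff_nonempty.2 h.1.not_ge)
  have hmJ : m ∈ J.1 := (mem_sdiff.1 hm.prop).1
  have hmI : m ∉ I.1 := (mem_sdiff.1 hm.prop).2
  have hmin : Minimal (· ∉ I.1) m :=
    ⟨hmI, fun b hbI hbm => hm.2 (mem_sdiff.2 ⟨J.isLowerSet hbm hmJ, hbI⟩) hbm⟩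
  have hK : IsLowerSet ((insert m I.1 : Finset L) : Set L) := by
    simpa using (I.isLowerSet.isLowerSet_insert_iff hmI).2 hmin
  let K := ofIsLowerSet _ hK
  have hIK : I < K := ssubset_insert hmI
  have hKJ : K ≤ J := insert_subset hmJ h.1.le
  have hK_eq : K = J := hKJ.lt_or_eq.resolve_left (h.2 hIK)
  exact hK_eq ▸ covBy_insert hmI

lemma card_covBy_left_eq_card_maximal (I : OrderIdeals L) :
    #{J | J ⋖ I} = #{m | Maximal (· ∈ I.1) m} := by
  have hideal {m} (hm : Maximal (· ∈ I.1) m) : IsLowerSet ((I.1.erase m : Finset L) : Set L) := by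
    simpa using (I.isLowerSet.isLowerSet_diff_singleton_iff hm.prop).2 hm
  symm
  refine card_bij (fun m hm => ofIsLowerSet _ (hideal ((mem_filter_univ _).1 hm))) (fun m hm => ?_)
    (fun m₁ hm₁ m₂ hm₂ h => ?_) (fun J hJ => ?_)
  · exact (mem_filter_univ _).2 (val_covBy_val.1 (erase_covBy ((mem_filter_univ _).1 hm).prop))
  · exact I.1.erase_injOn ((mem_filter_univ _).1 hm₁).prop ((mem_filter_univ _).1 hm₂).prop
      (congrArg Subtype.val h)
  · have hJI : J.1 ⋖ I.1 := val_covBy_val.2 ((mem_filter_univ J).1 hJ)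
    obtain ⟨m, hm, hJm⟩ := covBy_iff_exists_erase.1 hJI
    have hmax : Maximal (· ∈ I.1) m := by
      have := J.isLowerSet
      rw [← hJm, coe_erase] at this
      exact (I.isLowerSet.isLowerSet_diff_singleton_iff hm).1 this
    exact ⟨m, (mem_filter_univ _).2 hmax, Subtype.ext hJm⟩

lemma card_covBy_right_eq_card_minimal (I : OrderIdeals L) :
    #{J | I ⋖ J} = #{m | Minimal (· ∉ I.1) m} := by
  have hideal {m} (hm : Minimal (· ∉ I.1) m) : IsLowerSet ((insert m I.1 : Finset L) : Set L) := by
    simpa using (I.isLowerSet.isLowerSet_insert_iff hm.prop).2 hm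
  symm
  refine card_bij (fun m hm => ofIsLowerSet _ (hideal ((mem_filter_univ _).1 hm))) (fun m hm => ?_)
    (fun m₁ hm₁ m₂ hm₂ h => ?_) (fun J hJ => ?_)
  · exact (mem_filter_univ _).2 (val_covBy_val.1 (covBy_insert ((mem_filter_univ _).1 hm).prop))
  · exact (insert_inj ((mem_filter_univ _).1 hm₁).prop).1 (congrArg Subtype.val h)
  · have hIJ : I.1 ⋖ J.1 := val_covBy_val.2 ((mem_filter_univ J).1 hJ)
    obtain ⟨m, hm, hJm⟩ := covBy_iff_exists_insert.1 hIJ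
    have hmin : Minimal (· ∉ I.1) m := by
      have := J.isLowerSet
      rw [← hJm, coe_insert] at this
      exact (I.isLowerSet.isLowerSet_insert_iff hm).1 this
    exact ⟨m, (mem_filter_univ _).2 hmin, Subtype.ext hJm⟩

noncomputable def maximalsEquiv :
    OrderIdeals L ≃ {A : Finset L // IsAntichain (· ≤ ·) (A : Set L)} where
  toFun I := ⟨({m | Maximal (· ∈ I.1) m} : Finset L), by simpa using setOfPred_maximal_antichain _⟩
  invFun A := ofLowerSet (lowerClosure (A : Set L))
  left_inv I := by
    ext x
    simp only [mem_ofLowerSet, mem_lowerClosure, coe_filter_univ, Set.mem_ofPred_eq]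
    exact ⟨fun ⟨m, hm, hxm⟩ => I.isLowerSet hxm hm.prop,
      fun hx => (I.1.exists_le_maximal hx).imp fun _ h => h.symm⟩
  right_inv A := by
    ext m
    simpa using A.2.maximal_mem_lowerClosure_iff_mem (x := m)

noncomputable def minimalsComplEquiv :
    OrderIdeals L ≃ {A : Finset L // IsAntichain (· ≤ ·) (A : Set L)} where
  toFun I := ⟨({m | Minimal (· ∉ I.1) m} : Finset L), by simpa using setOfPred_minimal_antichain _⟩
  invFun A := ofLowerSet (upperClosure (A : Set L)).compl
  left_inv I := by
    ext x
    simp only [mem_ofLowerSet, UpperSet.mem_compl_iff, mem_upperClosure, coe_filter_univ,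
      Set.mem_ofPred_eq, not_exists, not_and]
    refine ⟨fun h => by_contra fun hx => ?_, fun hx m hm hmx => hm.prop (I.isLowerSet hmx hx)⟩
    obtain ⟨m, hmx, hm⟩ := Finite.exists_le_minimal (p := (· ∉ I.1)) hx
    exact h m hm hmx
  right_inv A := by
    ext m
    simpa using A.2.minimal_mem_upperClosure_iff_mem (x := m)

end OrderIdeals

lemma coeff_sum_X_pow_card {R α : Type*} [Semiring R] [Fintype α] (P : Finset α → Prop) (k : ℕ) :
    (∑ A : {A : Finset α // P A}, (X : R[X]) ^ A.1.card).coeff k =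
      ((Finset.univ.filter fun A : Finset α => P A ∧ A.card = k).card : R) := by
  rw [← Finset.sum_subtype _ Finset.mem_filter_univ fun A : Finset α => (X : R[X]) ^ A.card,
    finsetSum_coeff]
  simp [coeff_X_pow, Finset.filter_filter, eq_comm]

/-- For `P = J(L)` the lattice of order ideals of a finite poset `L`, the upper
and lower covering polynomials of `P` coincide, and the coefficient of `q^k` in
the common polynomial equals the number of `k`-element antichains in `L`. -/
theorem covering_polys_orderIdeals (L : Type*) [Fintype L] [PartialOrder L] :
    ((∑ I : OrderIdeals L, X ^ (Finset.univ.filter fun J => J ⋖ I).card : Polynomial ℤ) =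
        ∑ I : OrderIdeals L, X ^ (Finset.univ.filter fun J => I ⋖ J).card) ∧
      ∀ k : ℕ,
        (∑ I : OrderIdeals L, X ^ (Finset.univ.filter fun J => J ⋖ I).card :
            Polynomial ℤ).coeff k =
          ((Finset.univ : Finset (Finset L)).filter fun A : Finset L =>
            IsAntichain (· ≤ ·) (A : Set L) ∧ A.card = k).card := by
  have hlower : (∑ I : OrderIdeals L, X ^ (Finset.univ.filter fun J => J ⋖ I).card : ℤ[X]) =
      ∑ A : {A : Finset L // IsAntichain (· ≤ ·) (A : Set L)}, X ^ A.1.card :=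
    Fintype.sum_equiv OrderIdeals.maximalsEquiv _ _ fun I =>
      congrArg (X ^ ·) (OrderIdeals.card_covBy_left_eq_card_maximal I)
  have hupper : (∑ I : OrderIdeals L, X ^ (Finset.univ.filter fun J => I ⋖ J).card : ℤ[X]) =
      ∑ A : {A : Finset L // IsAntichain (· ≤ ·) (A : Set L)}, X ^ A.1.card :=
    Fintype.sum_equiv OrderIdeals.minimalsComplEquiv _ _ fun I =>
      congrArg (X ^ ·) (OrderIdeals.card_covBy_right_eq_card_minimal I)
  exact ⟨hlower.trans hupper.symm, fun k => hlower ▸ coeff_sum_X_pow_card _ k⟩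
end

section
/- The number of k-element antichains in the rectangular poset R(n, n+1) = [n] × [n+1] (product of two chains) equals C(n,k)·C(n+1,k). -/
/-!
In a product of two linear orders, two distinct points of an antichain are ordered oppositely in
the two coordinates. So a `k`-antichain, listed by increasing first coordinate, is the set
`{(f i, g i)}` for a strictly increasing `f : Fin k → α` and a strictly decreasing
`g : Fin k → β`, and conversely every such pair gives a `k`-antichain. The pair `(f, g)` is
determined by the ranges of `f` and `g`, which are arbitrary `k`-subsets of `α` and `β`.
-/

open scoped Classical

open Finset OrderDual

namespace IsAntichain

variable {α β : Type*}

theorem lt_and_lt_of_toLex_lt [Preorder α] [LinearOrder β] {s : Set (α × β)}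
    (hs : IsAntichain (· ≤ ·) s) {p q : α × β} (hp : p ∈ s) (hq : q ∈ s)
    (hpq : toLex p < toLex q) : p.1 < q.1 ∧ q.2 < p.2 := by
  have hne : p ≠ q := fun h => hpq.ne (congrArg toLex h)
  rcases Prod.Lex.lt_iff.mp hpq with h1 | ⟨h1, h2⟩
  · exact ⟨h1, lt_of_not_ge fun h2 => hs hp hq hne ⟨h1.le, h2⟩⟩
  · exact absurd ⟨h1.le, h2.le⟩ (hs hp hq hne)

end IsAntichain

section

variable {α β : Type*} [LinearOrder α] [LinearOrder β] {k : ℕ}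

def zipAntichain (f : Fin k ↪o α) (g : Fin k ↪o βᵒᵈ) : Finset (α × β) :=
  univ.image fun i => (f i, ofDual (g i))

theorem isAntichain_zipAntichain (f : Fin k ↪o α) (g : Fin k ↪o βᵒᵈ) :
    IsAntichain (· ≤ ·) (zipAntichain f g : Set (α × β)) := by
  rintro _ hx _ hy hne ⟨h1, h2⟩
  simp only [zipAntichain, coe_image, coe_univ, Set.image_univ, Set.mem_range] at hx hy
  obtain ⟨i, rfl⟩ := hx
  obtain ⟨j, rfl⟩ := hy
  have hij : i ≤ j := f.le_iff_le.mp h1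
  have hji : j ≤ i := g.le_iff_le.mp h2
  exact hne (by rw [le_antisymm hij hji])

theorem card_zipAntichain (f : Fin k ↪o α) (g : Fin k ↪o βᵒᵈ) : #(zipAntichain f g) = k := by
  rw [zipAntichain, card_image_of_injective _ fun i j h => f.injective (congrArg Prod.fst h),
    card_univ, Fintype.card_fin]

theorem image_fst_zipAntichain (f : Fin k ↪o α) (g : Fin k ↪o βᵒᵈ) :
    (zipAntichain f g).image Prod.fst = univ.image f := by
  rw [zipAntichain, image_image]; rfl

theorem image_snd_zipAntichain (f : Fin k ↪o α) (g : Fin k ↪o βᵒᵈ) :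
    (zipAntichain f g).image (toDual ∘ Prod.snd) = univ.image g := by
  rw [zipAntichain, image_image]; rfl

theorem zipAntichain_injective :
    Function.Injective fun fg : (Fin k ↪o α) × (Fin k ↪o βᵒᵈ) => zipAntichain fg.1 fg.2 := by
  rintro ⟨f, g⟩ ⟨f', g'⟩ h
  have hf : Set.range f = Set.range f' := by
    have := congrArg (fun A => ((A.image Prod.fst : Finset α) : Set α)) h
    simpa only [image_fst_zipAntichain, coe_image, coe_univ, Set.image_univ] using this
  have hg : Set.range g = Set.range g' := by
    have := congrArg (fun A => ((A.image (toDual ∘ Prod.snd) : Finset βᵒᵈ) : Set βᵒᵈ)) h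
    simpa only [image_snd_zipAntichain, coe_image, coe_univ, Set.image_univ] using this
  exact Prod.ext (OrderEmbedding.range_inj.mp hf) (OrderEmbedding.range_inj.mp hg)

theorem exists_zipAntichain_eq {A : Finset (α × β)} (hA : IsAntichain (· ≤ ·) (A : Set (α × β)))
    (hk : #A = k) : ∃ (f : Fin k ↪o α) (g : Fin k ↪o βᵒᵈ), zipAntichain f g = A := by
  let h := (A.map toLex.toEmbedding).orderEmbOfFin (by rw [card_map, hk])
  have mem (i : Fin k) : ofLex (h i) ∈ A := by
    simpa using (A.map toLex.toEmbedding).orderEmbOfFin_mem _ i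
  have lt_lt {i j : Fin k} (hij : i < j) :
      (ofLex (h i)).1 < (ofLex (h j)).1 ∧ (ofLex (h j)).2 < (ofLex (h i)).2 :=
    hA.lt_and_lt_of_toLex_lt (mem i) (mem j) (h.strictMono hij)
  refine ⟨.ofStrictMono (fun i => (ofLex (h i)).1) fun i j hij => (lt_lt hij).1,
    .ofStrictMono (fun i => toDual (ofLex (h i)).2) fun i j hij => (lt_lt hij).2, ?_⟩
  calc zipAntichain _ _ = (univ.image h).image ofLex := by
        rw [image_image]; rfl
    _ = A := by
        rw [image_orderEmbOfFin_univ, map_eq_image, image_image]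
        exact image_id'

noncomputable def zipAntichainEquiv :
    (Fin k ↪o α) × (Fin k ↪o βᵒᵈ) ≃
      {A : Finset (α × β) // IsAntichain (· ≤ ·) (A : Set (α × β)) ∧ #A = k} :=
  .ofBijective (fun fg => ⟨zipAntichain fg.1 fg.2,
      isAntichain_zipAntichain fg.1 fg.2, card_zipAntichain fg.1 fg.2⟩)
    ⟨fun _ _ h => zipAntichain_injective (congrArg Subtype.val h), fun A => by
      obtain ⟨f, g, hfg⟩ := exists_zipAntichain_eq A.2.1 A.2.2
      exact ⟨(f, g), Subtype.ext hfg⟩⟩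

end

theorem Nat.card_orderEmbedding_fin (k : ℕ) (α : Type*) [LinearOrder α] :
    Nat.card (Fin k ↪o α) = (Nat.card α).choose k :=
  (Nat.card_congr Set.powersetCard.ofFinEmbEquiv).trans (Set.powersetCard.card α k)

theorem Nat.card_antichains_prod (k : ℕ) (α β : Type*) [LinearOrder α] [LinearOrder β] :
    Nat.card {A : Finset (α × β) // IsAntichain (· ≤ ·) (A : Set (α × β)) ∧ #A = k} =
      (Nat.card α).choose k * (Nat.card β).choose k := by
  rw [← Nat.card_congr zipAntichainEquiv, Nat.card_prod, Nat.card_orderEmbedding_fin,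
    Nat.card_orderEmbedding_fin]
  rfl

/-- The number of `k`-element antichains in the rectangular poset
`R(n, n+1) = [n] × [n+1]` (product of two chains) is `C(n,k)·C(n+1,k)`. -/
theorem antichains_rectangle (n k : ℕ) :
    ((Finset.univ : Finset (Finset (Fin n × Fin (n + 1)))).filter fun A : Finset (Fin n × Fin (n + 1)) =>
        IsAntichain (· ≤ ·) (A : Set (Fin n × Fin (n + 1))) ∧ A.card = k).card =
      n.choose k * (n + 1).choose k := by
  rw [← Fintype.card_subtype, ← Nat.card_eq_fintype_card, Nat.card_antichains_prod,
    Nat.card_eq_fintype_card, Nat.card_eq_fintype_card, Fintype.card_fin, Fintype.card_fin]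
end

section
/- Let P̃ be a finite distributive lattice and P ⊆ P̃ a down-closed subposet (if I ∈ P and I' ≤ I in P̃ then I' ∈ P). Then 2Δ_P(1) = #{wedge-triples} − #{vee-triples} ≤ 0, where a wedge-triple is (x, y₁, y₂) with y₁ ≠ y₂ both covered by x and a vee-triple is (x₁, x₂, y) with x₁ ≠ x₂ both covering y. Moreover, equality holds iff P is a distributive lattice. -/
open scoped Classical
open Finset Polynomial

/-!
Write `d⁻(x)` and `d⁺(x)` for the numbers of lower and upper covers of `x` in `P`. Wedge-triples
number `∑ d⁻(x) (d⁻(x) - 1)` and vee-triples `∑ d⁺(x) (d⁺(x) - 1)`; these are the values at `1`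
of the second derivatives of `∑ X ^ d⁻(x)` and `∑ X ^ d⁺(x)`, while `((X - 1)² D)''(1) = 2 D(1)`.

Since `P` is down-closed, covers in `P` are covers in `P̃` and `P` is closed under `⊓`. Two
distinct lower covers `y₁, y₂` of `x` satisfy `x = y₁ ⊔ y₂`, and by modularity `y₁ ⊓ y₂ ⋖ y₁, y₂`:
this injects wedges into vees. If the counts agree the injection is onto, so every vee of `P` is
closed to a diamond inside `P`; an induction climbing along covers from `a ⊓ b` then shows that
`P` is closed under `⊔`, i.e. a (distributive) sublattice of `P̃`. Conversely, in that case
`(x₁, x₂, y) ↦ (x₁ ⊔ x₂, x₁, x₂)` injects vees into wedges.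
-/

section Counting

lemma card_filter_ne_mem_mem {γ δ : Type*} [Fintype γ] [Fintype δ] (s : γ → Finset δ) :
    #{p : γ × δ × δ | p.2.1 ≠ p.2.2 ∧ p.2.1 ∈ s p.1 ∧ p.2.2 ∈ s p.1} =
      ∑ c, #(s c) * (#(s c) - 1) := by
  rw [card_eq_sum_card_fiberwise (f := Prod.fst) fun _ _ => mem_univ _]
  refine sum_congr rfl fun c _ => ?_
  rw [Nat.mul_sub_one, ← offDiag_card]
  refine card_nbij' Prod.snd (Prod.mk c) ?_ ?_ ?_ ?_ <;> intro p <;> aesop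

variable (β : Type*) [Preorder β] [Fintype β]

noncomputable def wedgeTriples : Finset (β × β × β) :=
  {t | t.2.1 ≠ t.2.2 ∧ t.2.1 ⋖ t.1 ∧ t.2.2 ⋖ t.1}

noncomputable def veeTriples : Finset (β × β × β) :=
  {t | t.1 ≠ t.2.1 ∧ t.2.2 ⋖ t.1 ∧ t.2.2 ⋖ t.2.1}

lemma card_wedgeTriples :
    #(wedgeTriples β) = ∑ x : β, #{y | y ⋖ x} * (#{y | y ⋖ x} - 1) := by
  rw [← card_filter_ne_mem_mem]
  simp [wedgeTriples]

lemma card_veeTriples :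
    #(veeTriples β) = ∑ y : β, #{x | y ⋖ x} * (#{x | y ⋖ x} - 1) := by
  rw [← card_filter_ne_mem_mem]
  refine card_equiv ((Equiv.prodAssoc β β β).symm.trans (Equiv.prodComm _ _)) fun t => ?_
  simp [veeTriples]

end Counting

section SecondDerivative
variable {R : Type*} [CommRing R]

lemma eval_one_derivative_derivative_X_pow (n : ℕ) :
    (derivative (derivative (X ^ n : R[X]))).eval 1 = (n * (n - 1) : ℕ) := by
  simp [derivative_X_pow]

lemma eval_one_derivative_derivative_X_sub_one_sq_mul (D : R[X]) :
    (derivative (derivative ((X - 1) ^ 2 * D))).eval 1 = 2 * D.eval 1 := by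
  simp [derivative_mul, derivative_pow]

end SecondDerivative

lemma two_mul_eval_one_eq_card_wedgeTriples_sub_card_veeTriples {β : Type*} [Preorder β]
    [Fintype β] {D : ℤ[X]}
    (hD : (∑ x : β, X ^ #{y | y ⋖ x} - ∑ x : β, X ^ #{y | x ⋖ y} : ℤ[X]) = (X - 1) ^ 2 * D) :
    2 * D.eval 1 = #(wedgeTriples β) - #(veeTriples β) := by
  rw [← eval_one_derivative_derivative_X_sub_one_sq_mul, ← hD]
  simp only [map_sub, map_sum, eval_sub, eval_finsetSum, eval_one_derivative_derivative_X_pow,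
    card_wedgeTriples, card_veeTriples, Nat.cast_sum]

lemma Set.OrdConnected.coe_covBy_coe {α : Type*} [Preorder α] {P : Set α} (hP : P.OrdConnected)
    {a b : P} : (a : α) ⋖ b ↔ a ⋖ b :=
  Set.OrdConnected.apply_covBy_apply_iff (OrderEmbedding.subtype (· ∈ P)) (by simpa using hP)

section Triples

variable {α : Type*} [Lattice α] [Fintype α] {P : Set α}

lemma sup_eq_of_mem_wedgeTriples (hP : P.OrdConnected) {t : P × P × P}
    (ht : t ∈ wedgeTriples P) : (t.2.1 : α) ⊔ t.2.2 = t.1 := by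
  simp only [wedgeTriples, mem_filter, mem_univ, true_and, ← hP.coe_covBy_coe] at ht
  exact ht.2.1.wcovBy.sup_eq ht.2.2.wcovBy (Subtype.coe_ne_coe.2 ht.1)

lemma inf_eq_of_mem_veeTriples (hP : P.OrdConnected) {t : P × P × P}
    (ht : t ∈ veeTriples P) : (t.1 : α) ⊓ t.2.1 = t.2.2 := by
  simp only [veeTriples, mem_filter, mem_univ, true_and, ← hP.coe_covBy_coe] at ht
  exact ht.2.1.wcovBy.inf_eq ht.2.2.wcovBy (Subtype.coe_ne_coe.2 ht.1)

def wedgeToVee (hP : InfClosed P) (t : P × P × P) : P × P × P :=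
  (t.2.1, t.2.2, ⟨t.2.1 ⊓ t.2.2, hP t.2.1.2 t.2.2.2⟩)

lemma mapsTo_wedgeToVee [IsLowerModularLattice α] (hP : P.OrdConnected) (hinf : InfClosed P) :
    Set.MapsTo (wedgeToVee hinf) (wedgeTriples P) (veeTriples P) := by
  intro t ht
  have hjoin := sup_eq_of_mem_wedgeTriples hP ht
  simp only [wedgeTriples, veeTriples, coe_filter, mem_univ, true_and, Set.mem_ofPred_eq,
    wedgeToVee, ← hP.coe_covBy_coe, ← hjoin] at ht ⊢
  exact ⟨ht.1, inf_covBy_of_covBy_sup_right ht.2.2, inf_covBy_of_covBy_sup_left ht.2.1⟩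

lemma injOn_wedgeToVee (hP : P.OrdConnected) (hinf : InfClosed P) :
    Set.InjOn (wedgeToVee hinf) (wedgeTriples P) := by
  intro t ht s hs hts
  simp only [wedgeToVee, Prod.mk.injEq] at hts
  refine Prod.ext (Subtype.ext ?_) (Prod.ext hts.1 hts.2.1)
  rw [← sup_eq_of_mem_wedgeTriples hP ht, ← sup_eq_of_mem_wedgeTriples hP hs, hts.1, hts.2.1]

lemma card_wedgeTriples_le_card_veeTriples [IsLowerModularLattice α] (hP : P.OrdConnected)
    (hinf : InfClosed P) : #(wedgeTriples P) ≤ #(veeTriples P) :=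
  card_le_card_of_injOn _ (mapsTo_wedgeToVee hP hinf) (injOn_wedgeToVee hP hinf)

lemma IsLowerSet.sup_mem_of_card_veeTriples_le [IsLowerModularLattice α] (hP : IsLowerSet P)
    (hcard : #(veeTriples P) ≤ #(wedgeTriples P)) :
    ∀ ⦃y a b⦄, a ∈ P → b ∈ P → a ≠ b → y ⋖ a → y ⋖ b → a ⊔ b ∈ P := by
  intro y a b ha hb hab hya hyb
  have hvee : ((⟨a, ha⟩, ⟨b, hb⟩, ⟨y, hP hya.le ha⟩) : P × P × P) ∈ veeTriples P := by
    simp [veeTriples, ← hP.ordConnected.coe_covBy_coe, hab, hya, hyb]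
  obtain ⟨⟨x, y₁, y₂⟩, hs, hst⟩ := surjOn_of_injOn_of_card_le _
    (mapsTo_wedgeToVee hP.ordConnected hP.infClosed)
    (injOn_wedgeToVee hP.ordConnected hP.infClosed) hcard hvee
  simp only [wedgeToVee, Prod.mk.injEq] at hst
  obtain ⟨rfl, rfl, -⟩ := hst
  exact sup_eq_of_mem_wedgeTriples hP.ordConnected hs ▸ x.2

lemma card_veeTriples_le_card_wedgeTriples [IsUpperModularLattice α] (hP : P.OrdConnected)
    (hsup : SupClosed P) : #(veeTriples P) ≤ #(wedgeTriples P) := by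
  refine card_le_card_of_injOn (fun t => (⟨t.1 ⊔ t.2.1, hsup t.1.2 t.2.1.2⟩, t.1, t.2.1)) ?_ ?_
  · intro t ht
    have hmeet := inf_eq_of_mem_veeTriples hP ht
    simp only [wedgeTriples, veeTriples, coe_filter, mem_univ, true_and, Set.mem_ofPred_eq,
      ← hP.coe_covBy_coe, ← hmeet] at ht ⊢
    exact ⟨ht.1, covBy_sup_of_inf_covBy_right ht.2.2, covBy_sup_of_inf_covBy_left ht.2.1⟩
  · intro t ht s hs hts
    simp only [Prod.mk.injEq] at hts
    refine Prod.ext hts.2.1 (Prod.ext hts.2.2 (Subtype.ext ?_))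
    rw [← inf_eq_of_mem_veeTriples hP ht, ← inf_eq_of_mem_veeTriples hP hs, hts.2.1, hts.2.2]

end Triples

section Closure

variable {α : Type*} [Lattice α] [WellFoundedGT α] [IsStronglyAtomic α] {P : Set α}

-- With `y ⋖ c ≤ b`, the vee `y ⋖ a, c` closes to `a ⊔ c ∈ P`; recurse on `c ⋖ a ⊔ c`, `c ≤ b`.
lemma IsLowerSet.sup_mem_of_covBy_of_le [IsUpperModularLattice α] (hP : IsLowerSet P)
    (hvee : ∀ ⦃y a b⦄, a ∈ P → b ∈ P → a ≠ b → y ⋖ a → y ⋖ b → a ⊔ b ∈ P)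
    {y a b : α} (hya : y ⋖ a) (hyb : y ≤ b) (ha : a ∈ P) (hb : b ∈ P) : a ⊔ b ∈ P := by
  induction y using WellFoundedGT.induction generalizing a with
  | _ y ih =>
  rcases hyb.eq_or_lt with rfl | hlt
  · rwa [sup_eq_left.2 hya.le]
  obtain ⟨c, hyc, hcb⟩ := exists_covBy_le_of_lt hlt
  by_cases hac : a = c
  · rwa [hac, sup_eq_right.2 hcb]
  have hca : c ⋖ a ⊔ c := covBy_sup_of_inf_covBy_left (hya.wcovBy.inf_eq hyc.wcovBy hac ▸ hya)
  have := ih c hyc.lt hca hcb (hvee ha (hP hcb hb) hac hya hyc)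
  rwa [sup_assoc, sup_eq_right.2 hcb] at this

lemma IsLowerSet.supClosed_of_sup_mem_of_covBy [IsUpperModularLattice α] (hP : IsLowerSet P)
    (hvee : ∀ ⦃y a b⦄, a ∈ P → b ∈ P → a ≠ b → y ⋖ a → y ⋖ b → a ⊔ b ∈ P) : SupClosed P := by
  suffices h : ∀ y a b, y ≤ a → y ≤ b → a ∈ P → b ∈ P → a ⊔ b ∈ P from
    fun a ha b hb => h (a ⊓ b) a b inf_le_left inf_le_right ha hb
  intro y
  induction y using WellFoundedGT.induction with
  | _ y ih =>
  intro a b hya hyb ha hb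
  rcases hya.eq_or_lt with rfl | hlt
  · rwa [sup_eq_right.2 hyb]
  obtain ⟨c, hyc, hca⟩ := exists_covBy_le_of_lt hlt
  have hcb : c ⊔ b ∈ P := hP.sup_mem_of_covBy_of_le hvee hyc hyb (hP hca ha) hb
  have := ih c hyc.lt a (c ⊔ b) hca le_sup_left ha hcb
  rwa [← sup_assoc, sup_eq_left.2 hca] at this

end Closure

lemma IsLowerSet.exists_distribLattice_iff_supClosed {α : Type*} [DistribLattice α] {P : Set α}
    (hP : IsLowerSet P) :
    (∃ sup inf : ↥P → ↥P → ↥P,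
      (∀ a b : ↥P, IsLUB {a, b} (sup a b)) ∧
      (∀ a b : ↥P, IsGLB {a, b} (inf a b)) ∧
      ∀ a b c : ↥P, inf a (sup b c) = sup (inf a b) (inf a c)) ↔ SupClosed P := by
  refine ⟨fun ⟨sup, _, hsup, _⟩ a ha b hb => ?_, fun hsup => ?_⟩
  · have hub := (hsup ⟨a, ha⟩ ⟨b, hb⟩).1
    exact hP (sup_le (hub (Set.mem_insert _ _)) (hub (Set.mem_insert_of_mem _ rfl)))
      (sup ⟨a, ha⟩ ⟨b, hb⟩).2
  · let _ := Subtype.distribLattice (P := (· ∈ P)) (fun _ _ ha hb => hsup ha hb)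
      (fun _ _ ha hb => hP.infClosed ha hb)
    exact ⟨(· ⊔ ·), (· ⊓ ·), fun _ _ => isLUB_pair, fun _ _ => isGLB_pair,
      fun _ _ _ => inf_sup_left _ _ _⟩

/-- Let `P̃` be a finite distributive lattice and `P ⊆ P̃` a down-closed
subposet. With covering relations taken inside `P`, let `W` be the number of
wedge-triples `(x, y₁, y₂)` (with `y₁ ≠ y₂` both covered by `x`) and `Vee` the
number of vee-triples `(x₁, x₂, y)` (with `x₁ ≠ x₂` both covering `y`). Then
for any polynomial `D` with `K^v_P - K^λ_P = (q-1)² D` one has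
`2·D(1) = W - Vee ≤ 0`, with equality iff `P` is a distributive lattice. -/
theorem deviation_downclosed_subposet {α : Type*} [Fintype α] [DistribLattice α]
    (P : Set α) (hdc : ∀ ⦃x y : α⦄, x ∈ P → y ≤ x → y ∈ P)
    (W Vee : ℕ)
    (hW : W = (Finset.univ.filter fun t : ↥P × ↥P × ↥P =>
      t.2.1 ≠ t.2.2 ∧ t.2.1 ⋖ t.1 ∧ t.2.2 ⋖ t.1).card)
    (hV : Vee = (Finset.univ.filter fun t : ↥P × ↥P × ↥P =>
      t.1 ≠ t.2.1 ∧ t.2.2 ⋖ t.1 ∧ t.2.2 ⋖ t.2.1).card) :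
    (∀ D : Polynomial ℤ,
      ((∑ x : ↥P, Polynomial.X ^ (Finset.univ.filter fun y => y ⋖ x).card : Polynomial ℤ) -
          ∑ x : ↥P, Polynomial.X ^ (Finset.univ.filter fun y => x ⋖ y).card) =
        (Polynomial.X - 1) ^ 2 * D →
      2 * D.eval 1 = (W : ℤ) - (Vee : ℤ)) ∧
    W ≤ Vee ∧
    (W = Vee ↔ ∃ sup inf : ↥P → ↥P → ↥P,
      (∀ a b : ↥P, IsLUB {a, b} (sup a b)) ∧
      (∀ a b : ↥P, IsGLB {a, b} (inf a b)) ∧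
      ∀ a b c : ↥P, inf a (sup b c) = sup (inf a b) (inf a c)) := by
  have hP : IsLowerSet P := fun _ _ hle hx => hdc hx hle
  replace hW : W = #(wedgeTriples P) := hW.trans (by rw [wedgeTriples]; congr!)
  replace hV : Vee = #(veeTriples P) := hV.trans (by rw [veeTriples]; congr!)
  subst hW hV
  have hWV := card_wedgeTriples_le_card_veeTriples hP.ordConnected hP.infClosed
  refine ⟨fun D hD => two_mul_eval_one_eq_card_wedgeTriples_sub_card_veeTriples hD, hWV, ?_⟩
  rw [hP.exists_distribLattice_iff_supClosed]
  exact ⟨fun h => hP.supClosed_of_sup_mem_of_covBy (hP.sup_mem_of_card_veeTriples_le h.ge),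
    fun h => hWV.antisymm (card_veeTriples_le_card_wedgeTriples hP.ordConnected h)⟩
end
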